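/- There exists an absolute constant C > 0 such that for every α ∈ (9/10, 1), every i ∈ {1, 2, 3}, and every x ∈ (0, π): | d^i/dx^i ( sin(x) − c_α (sin x)^α ) | ≤ C (1−α) (sin x)^{7/8 − i}. -/

import Mathlib

/-!
Since `sin s * cot (s / 2) = 1 + cos s`, the integral defining `c_α⁻¹` equals
`∫₀^π sin^(α-1) (1 + cos)`. On `(0, 1]` we have `1 ≤ u^(α-1) ≤ 1 + 40 (1-α) u^(-1/8)`,
because `log u⁻¹ ≤ 40 u^(-1/40)`; hence `1 - A (1-α) ≤ c_α ≤ 1` with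
`A = 80/π ∫₀^π sin^(-1/8)`.
The `i`-th derivative of `η_α = sin - c_α sin^α` is a bounded factor times
`1 - c_α β sin^(α-1)` with `1 - β = O(1-α)`, which the same two bounds make
`O((1-α) sin^(-1/8))`, plus a term carrying the factor `α (α-1)` of size `O((1-α) sin^(α-i))`.
-/

open Real Set MeasureTheory intervalIntegral Filter

theorem rpow_neg_le_one_add {u D ε : ℝ} (hu : 0 < u) (hD : 0 ≤ D) (hε : 0 < ε) :
    u ^ (-D) ≤ 1 + D / ε * u ^ (-(D + ε)) := by
  set y := u ^ (-D)
  have hy : 0 < y := rpow_pos_of_pos hu _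
  have hlog : log y = D * log u⁻¹ := by rw [log_rpow hu, log_inv]; ring
  have hmul : y * u⁻¹ ^ ε = u ^ (-(D + ε)) := by
    rw [inv_rpow hu.le, ← rpow_neg hu.le, ← rpow_add hu, neg_add]
  calc y = 1 + y * (1 - y⁻¹) := by field_simp; ring
    _ ≤ 1 + y * (D * log u⁻¹) := by
      rw [← hlog]; gcongr; exact one_sub_inv_le_log_of_pos hy
    _ ≤ 1 + y * (D * (u⁻¹ ^ ε / ε)) := by
      gcongr; exact log_le_rpow_div (inv_nonneg.2 hu.le) hε
    _ = 1 + D / ε * u ^ (-(D + ε)) := by rw [← hmul]; ring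

theorem rpow_sub_one_le_one_add {u α : ℝ} (hu0 : 0 < u) (hu1 : u ≤ 1) (hα : 9 / 10 ≤ α)
    (hα1 : α ≤ 1) : u ^ (α - 1) ≤ 1 + 40 * (1 - α) * u ^ (-(1 / 8) : ℝ) := by
  have h := rpow_neg_le_one_add hu0 (sub_nonneg.2 hα1) (by norm_num : (0 : ℝ) < 1 / 40)
  rw [neg_sub] at h
  have hexp : u ^ (-(1 - α + 1 / 40)) ≤ u ^ (-(1 / 8) : ℝ) :=
    rpow_le_rpow_of_exponent_ge hu0 hu1 (by linarith)
  calc u ^ (α - 1) ≤ 1 + (1 - α) / (1 / 40) * u ^ (-(1 - α + 1 / 40)) := h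
    _ ≤ 1 + (1 - α) / (1 / 40) * u ^ (-(1 / 8) : ℝ) := by gcongr
    _ = 1 + 40 * (1 - α) * u ^ (-(1 / 8) : ℝ) := by ring

theorem intervalIntegrable_sin_rpow {r : ℝ} (hr : -1 < r) :
    IntervalIntegrable (fun x => sin x ^ r) volume 0 π := by
  rcases le_or_gt 0 r with hr0 | hr0
  · exact ((continuous_rpow_const hr0).comp continuous_sin).intervalIntegrable _ _
  have hleft : IntervalIntegrable (fun x => sin x ^ r) volume 0 (π / 2) := by
    refine ((intervalIntegrable_rpow' hr).const_mul ((2 / π) ^ r)).mono_fun'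
      (continuous_sin.measurable.pow_const r).aestronglyMeasurable ?_
    rw [EventuallyLE, ae_restrict_iff' measurableSet_uIoc]
    refine .of_forall fun x hx => ?_
    rw [uIoc_of_le (by positivity)] at hx
    have hsin : 2 / π * x ≤ sin x := mul_le_sin hx.1.le hx.2
    have hpos : 0 < 2 / π * x := mul_pos (by positivity) hx.1
    rw [norm_of_nonneg (rpow_nonneg (hpos.le.trans hsin) _), ← mul_rpow (by positivity) hx.1.le]
    exact rpow_le_rpow_of_nonpos hpos hsin hr0.le
  have hright : IntervalIntegrable (fun x => sin x ^ r) volume (π / 2) π := by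
    have h := hleft.comp_sub_left π
    simp only [sin_pi_sub, sub_zero, sub_half] at h
    exact h.symm
  exact hleft.trans hright

theorem sin_mul_cot_half {s : ℝ} (hs : sin s ≠ 0) : sin s * cot (s / 2) = 1 + cos s := by
  have hdouble : sin s = 2 * sin (s / 2) * cos (s / 2) := by
    rw [← sin_two_mul, mul_div_cancel₀ s two_ne_zero]
  have hhalf : sin (s / 2) ≠ 0 := fun h => hs (by rw [hdouble, h]; ring)
  have hcos : 1 + cos s = 2 * cos (s / 2) ^ 2 := by
    rw [cos_sq, mul_div_cancel₀ s two_ne_zero]; ring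
  rw [hdouble, hcos, cot_eq_cos_div_sin]
  field_simp

theorem sin_rpow_mul_cot_half {s : ℝ} (hs : sin s ≠ 0) (α : ℝ) :
    sin s ^ α * cot (s / 2) = sin s ^ (α - 1) * (1 + cos s) := by
  rw [← sin_mul_cot_half hs, ← mul_assoc, ← rpow_add_one hs, sub_add_cancel]

theorem integral_one_add_cos : ∫ s in (0 : ℝ)..π, (1 + cos s) = π := by
  simp [integral_add intervalIntegrable_const intervalIntegrable_cos]

theorem integral_sin_rpow_mul_cot_half_bounds {α : ℝ} (hα : 9 / 10 ≤ α) (hα1 : α < 1) :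
    π ≤ ∫ s in (0 : ℝ)..π, sin s ^ α * cot (s / 2) ∧
      ∫ s in (0 : ℝ)..π, sin s ^ α * cot (s / 2)
        ≤ π + 80 * (1 - α) * ∫ s in (0 : ℝ)..π, sin s ^ (-(1 / 8) : ℝ) := by
  have hsin {s : ℝ} (hs : s ∈ Ioo 0 π) : 0 < sin s := sin_pos_of_pos_of_lt_pi hs.1 hs.2
  rw [integral_congr_Ioo_of_le pi_pos.le fun s hs => sin_rpow_mul_cot_half (hsin hs).ne' α]
  have hcos : IntervalIntegrable (fun s => 1 + cos s) volume 0 π :=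
    intervalIntegrable_const.add intervalIntegrable_cos
  have hf : IntervalIntegrable (fun s => sin s ^ (α - 1) * (1 + cos s)) volume 0 π :=
    (intervalIntegrable_sin_rpow (by linarith)).mul_continuousOn
      (continuous_const.add continuous_cos).continuousOn
  have hg : IntervalIntegrable (fun s => 1 + cos s + 80 * (1 - α) * sin s ^ (-(1 / 8) : ℝ))
      volume 0 π :=
    hcos.add ((intervalIntegrable_sin_rpow (by norm_num)).const_mul _)
  constructor
  · calc π = ∫ s in (0 : ℝ)..π, (1 + cos s) := integral_one_add_cos.symm
      _ ≤ _ := integral_mono_on_of_le_Ioo pi_pos.le hcos hf fun s hs =>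
          le_mul_of_one_le_left (by linarith [neg_one_le_cos s])
            (one_le_rpow_of_pos_of_le_one_of_nonpos (hsin hs) (sin_le_one s) (by linarith))
  · calc _ ≤ ∫ s in (0 : ℝ)..π, (1 + cos s + 80 * (1 - α) * sin s ^ (-(1 / 8) : ℝ)) := by
          refine integral_mono_on_of_le_Ioo pi_pos.le hf hg fun s hs => ?_
          have hP := rpow_sub_one_le_one_add (hsin hs) (sin_le_one s) hα hα1.le
          have hE := rpow_nonneg (hsin hs).le (-(1 / 8) : ℝ)
          have hc := neg_one_le_cos s
          have hc1 := cos_le_one s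
          nlinarith [mul_nonneg (mul_nonneg (sub_nonneg.2 hα1.le) hE) (sub_nonneg.2 hc1)]
      _ = _ := by
          rw [integral_add hcos ((intervalIntegrable_sin_rpow (by norm_num)).const_mul _),
            integral_one_add_cos, intervalIntegral.integral_const_mul]

noncomputable def cAlpha (α : ℝ) : ℝ :=
  ((1 / π) * ∫ s in (0 : ℝ)..π, sin s ^ α * cot (s / 2))⁻¹

theorem exists_cAlpha_bounds : ∃ A : ℝ, 0 ≤ A ∧ ∀ α : ℝ, 9 / 10 ≤ α → α < 1 →
    0 ≤ cAlpha α ∧ cAlpha α ∈ Icc (1 - A * (1 - α)) 1 := by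
  set M := ∫ s in (0 : ℝ)..π, sin s ^ (-(1 / 8) : ℝ)
  have hM : 0 ≤ M := integral_nonneg pi_pos.le fun s hs =>
    rpow_nonneg (sin_nonneg_of_nonneg_of_le_pi hs.1 hs.2) _
  refine ⟨80 * M / π, by positivity, fun α hα hα1 => ?_⟩
  obtain ⟨hlow, hhigh⟩ := integral_sin_rpow_mul_cot_half_bounds hα hα1
  set J := (1 / π) * ∫ s in (0 : ℝ)..π, sin s ^ α * cot (s / 2)
  have hJ1 : 1 ≤ J := by
    rw [show J = _ / π from one_div_mul_eq_div _ _, one_le_div pi_pos]; exact hlow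
  have hJ2 : J ≤ 1 + 80 * M / π * (1 - α) := by
    calc J ≤ (1 / π) * (π + 80 * (1 - α) * M) :=
          mul_le_mul_of_nonneg_left hhigh (by positivity)
      _ = 1 + 80 * M / π * (1 - α) := by field_simp
  have hJ0 : 0 < J := one_pos.trans_le hJ1
  show 0 ≤ J⁻¹ ∧ J⁻¹ ∈ Icc (1 - 80 * M / π * (1 - α)) 1
  refine ⟨inv_nonneg.2 hJ0.le, ?_, inv_le_one_of_one_le₀ hJ1⟩
  have hJJ : J * J⁻¹ = 1 := mul_inv_cancel₀ hJ0.ne'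
  nlinarith [mul_nonneg (sq_nonneg (J - 1)) (inv_nonneg.2 hJ0.le)]

theorem Set.EqOn.iteratedDeriv_succ {𝕜 F : Type*} [NontriviallyNormedField 𝕜]
    [NormedAddCommGroup F] [NormedSpace 𝕜 F] {f g g' : 𝕜 → F} {U : Set 𝕜} {n : ℕ}
    (hU : IsOpen U) (hfg : EqOn (iteratedDeriv n f) g U) (hg : ∀ x ∈ U, HasDerivAt g (g' x) x) :
    EqOn (iteratedDeriv (n + 1) f) g' U := fun x hx => by
  rw [_root_.iteratedDeriv_succ, (hfg.eventuallyEq_of_mem (hU.mem_nhds hx)).deriv_eq,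
    (hg x hx).deriv]

section Derivatives

variable (K α : ℝ)

noncomputable def eta (t : ℝ) : ℝ := sin t - K * sin t ^ α

noncomputable def etaDeriv1 (t : ℝ) : ℝ := cos t * (1 - K * α * sin t ^ (α - 1))

noncomputable def etaDeriv2 (t : ℝ) : ℝ :=
  K * α * (1 - α) * sin t ^ (α - 2) * cos t ^ 2 - sin t * (1 - K * α * sin t ^ (α - 1))

noncomputable def etaDeriv3 (t : ℝ) : ℝ :=
  -(K * α * (1 - α) * (2 - α) * sin t ^ (α - 3) * cos t ^ 3
    + cos t * (1 - K * (3 * α ^ 2 - 2 * α) * sin t ^ (α - 1)))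

variable {K α} {x : ℝ}

theorem hasDerivAt_sin_rpow (hx : sin x ≠ 0) (β : ℝ) :
    HasDerivAt (fun t => sin t ^ β) (β * cos x * sin x ^ (β - 1)) x := by
  convert (hasDerivAt_sin x).rpow_const (p := β) (Or.inl hx) using 1
  ring

theorem hasDerivAt_eta (hx : sin x ≠ 0) : HasDerivAt (eta K α) (etaDeriv1 K α x) x := by
  refine ((hasDerivAt_sin x).sub ((hasDerivAt_sin_rpow hx α).const_mul K)).congr_deriv ?_
  rw [etaDeriv1]
  ring

theorem hasDerivAt_etaDeriv1 (hx : sin x ≠ 0) :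
    HasDerivAt (etaDeriv1 K α) (etaDeriv2 K α x) x := by
  refine ((hasDerivAt_cos x).mul
    (((hasDerivAt_sin_rpow hx (α - 1)).const_mul (K * α)).const_sub 1)).congr_deriv ?_
  have hsq : sin x ^ (α - 1 - 1) = sin x ^ (α - 2) := by ring_nf
  rw [etaDeriv2, hsq]
  ring

theorem hasDerivAt_etaDeriv2 (hx : sin x ≠ 0) :
    HasDerivAt (etaDeriv2 K α) (etaDeriv3 K α x) x := by
  have h := (((hasDerivAt_sin_rpow hx (α - 2)).const_mul (K * α * (1 - α))).mul
    ((hasDerivAt_cos x).pow 2)).sub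
    ((hasDerivAt_sin x).mul (((hasDerivAt_sin_rpow hx (α - 1)).const_mul (K * α)).const_sub 1))
  refine h.congr_deriv ?_
  have h3 : sin x ^ (α - 2 - 1) = sin x ^ (α - 3) := by ring_nf
  have h2 : sin x ^ (α - 1 - 1) = sin x ^ (α - 2) := by ring_nf
  have h21 : sin x ^ (α - 2) * sin x = sin x ^ (α - 1) := by
    rw [← rpow_add_one hx]; ring_nf
  rw [etaDeriv3, h3, h2, Pi.pow_apply]
  linear_combination (3 * K * α * (α - 1) * cos x) * h21

theorem eqOn_iteratedDeriv_one_eta :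
    EqOn (iteratedDeriv 1 (eta K α)) (etaDeriv1 K α) {t | sin t ≠ 0} :=
  EqOn.iteratedDeriv_succ (isOpen_ne_fun continuous_sin continuous_const)
    (fun _ _ => by rw [iteratedDeriv_zero]) fun _ hx => hasDerivAt_eta hx

theorem eqOn_iteratedDeriv_two_eta :
    EqOn (iteratedDeriv 2 (eta K α)) (etaDeriv2 K α) {t | sin t ≠ 0} :=
  eqOn_iteratedDeriv_one_eta.iteratedDeriv_succ (isOpen_ne_fun continuous_sin continuous_const)
    fun _ hx => hasDerivAt_etaDeriv1 hx

theorem eqOn_iteratedDeriv_three_eta :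
    EqOn (iteratedDeriv 3 (eta K α)) (etaDeriv3 K α) {t | sin t ≠ 0} :=
  eqOn_iteratedDeriv_two_eta.iteratedDeriv_succ (isOpen_ne_fun continuous_sin continuous_const)
    fun _ hx => hasDerivAt_etaDeriv2 hx

end Derivatives

section Bounds

variable {α K A : ℝ}

theorem abs_one_sub_mul_rpow_le {β u : ℝ} (hu0 : 0 < u) (hu1 : u ≤ 1)
    (hα : α ∈ Icc (9 / 10) 1) (hK0 : 0 ≤ K) (hK : K ∈ Icc (1 - A * (1 - α)) 1)
    (hβ : β ∈ Icc 0 1) (hβα : 1 - β ≤ 4 * (1 - α)) :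
    |1 - K * β * u ^ (α - 1)| ≤ (A + 40) * (1 - α) * u ^ (-(1 / 8) : ℝ) := by
  have hP1 : 1 ≤ u ^ (α - 1) :=
    one_le_rpow_of_pos_of_le_one_of_nonpos hu0 hu1 (by linarith [hα.2])
  have hP2 := rpow_sub_one_le_one_add hu0 hu1 hα.1 hα.2
  have hE1 : 1 ≤ u ^ (-(1 / 8) : ℝ) :=
    one_le_rpow_of_pos_of_le_one_of_nonpos hu0 hu1 (by norm_num)
  obtain ⟨hKA, hK1⟩ := hK
  obtain ⟨hβ0, hβ1⟩ := hβ
  have hKβ : K * β ≤ 1 := mul_le_one₀ hK1 hβ0 hβ1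
  have hD : 0 ≤ 1 - α := sub_nonneg.2 hα.2
  have hAD : 0 ≤ A * (1 - α) := by linarith
  rw [abs_le]
  constructor
  · nlinarith [mul_le_mul_of_nonneg_right hKβ (zero_le_one.trans hP1),
      mul_nonneg hAD (zero_le_one.trans hE1)]
  · nlinarith [mul_nonneg (mul_nonneg hK0 hβ0) (sub_nonneg.2 hP1),
      mul_le_mul_of_nonneg_right hK1 (sub_nonneg.2 hβ1),
      mul_nonneg hAD (sub_nonneg.2 hE1), mul_nonneg hD (sub_nonneg.2 hE1)]

theorem abs_mul_rpow_mul_pow_le {a γ δ u c : ℝ} (n : ℕ) (hu0 : 0 < u) (hu1 : u ≤ 1)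
    (hc : |c| ≤ 1) (hδγ : δ ≤ γ) : |a * u ^ γ * c ^ n| ≤ |a| * u ^ δ := by
  rw [abs_mul, abs_mul, abs_of_pos (rpow_pos_of_pos hu0 γ), abs_pow]
  calc |a| * u ^ γ * |c| ^ n ≤ |a| * u ^ δ * 1 :=
        mul_le_mul (mul_le_mul_of_nonneg_left (rpow_le_rpow_of_exponent_ge hu0 hu1 hδγ)
          (abs_nonneg a)) (pow_le_one₀ (abs_nonneg c) hc) (by positivity) (by positivity)
    _ = |a| * u ^ δ := mul_one _

theorem abs_mul_one_sub_mul_rpow_le {β u c δ : ℝ} (hu0 : 0 < u) (hu1 : u ≤ 1)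
    (hα : α ∈ Icc (9 / 10) 1) (hK0 : 0 ≤ K) (hK : K ∈ Icc (1 - A * (1 - α)) 1)
    (hβ : β ∈ Icc 0 1) (hβα : 1 - β ≤ 4 * (1 - α)) (hc : |c| ≤ 1)
    (hδ : δ ≤ -(1 / 8)) :
    |c * (1 - K * β * u ^ (α - 1))| ≤ (A + 40) * (1 - α) * u ^ δ := by
  have hAD : 0 ≤ (A + 40) * (1 - α) := by linarith [hK.1, hK.2, hα.2]
  rw [abs_mul]
  calc |c| * |1 - K * β * u ^ (α - 1)| ≤ 1 * ((A + 40) * (1 - α) * u ^ (-(1 / 8) : ℝ)) :=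
        mul_le_mul hc (abs_one_sub_mul_rpow_le hu0 hu1 hα hK0 hK hβ hβα) (abs_nonneg _)
          zero_le_one
    _ ≤ (A + 40) * (1 - α) * u ^ δ := by
        rw [one_mul]
        exact mul_le_mul_of_nonneg_left (rpow_le_rpow_of_exponent_ge hu0 hu1 hδ) hAD

variable {x : ℝ}

theorem abs_etaDeriv1_le (hx : 0 < sin x) (hα : α ∈ Icc (9 / 10) 1) (hK0 : 0 ≤ K)
    (hK : K ∈ Icc (1 - A * (1 - α)) 1) :
    |etaDeriv1 K α x| ≤ (A + 41) * (1 - α) * sin x ^ ((7 : ℝ) / 8 - 1) := by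
  have hreg := abs_mul_one_sub_mul_rpow_le hx (sin_le_one x) hα hK0 hK
    ⟨by linarith [hα.1], hα.2⟩ (by linarith [hα.2]) (abs_cos_le_one x)
    (show (7 : ℝ) / 8 - 1 ≤ -(1 / 8) by norm_num)
  have hF := rpow_nonneg hx.le ((7 : ℝ) / 8 - 1)
  rw [etaDeriv1]
  nlinarith [mul_nonneg (sub_nonneg.2 hα.2) hF]

theorem abs_etaDeriv2_le (hx : 0 < sin x) (hα : α ∈ Icc (9 / 10) 1) (hK0 : 0 ≤ K)
    (hK : K ∈ Icc (1 - A * (1 - α)) 1) :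
    |etaDeriv2 K α x| ≤ (A + 41) * (1 - α) * sin x ^ ((7 : ℝ) / 8 - 2) := by
  have hreg := abs_mul_one_sub_mul_rpow_le hx (sin_le_one x) hα hK0 hK
    ⟨by linarith [hα.1], hα.2⟩ (by linarith [hα.2])
    (abs_sin_le_one x) (show (7 : ℝ) / 8 - 2 ≤ -(1 / 8) by norm_num)
  have hsing := abs_mul_rpow_mul_pow_le (a := K * α * (1 - α)) 2 hx (sin_le_one x)
    (abs_cos_le_one x) (show (7 : ℝ) / 8 - 2 ≤ α - 2 by linarith [hα.1])
  have hcoef : |K * α * (1 - α)| ≤ 1 - α := by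
    rw [abs_of_nonneg (mul_nonneg (mul_nonneg hK0 (by linarith [hα.1])) (sub_nonneg.2 hα.2))]
    exact mul_le_of_le_one_left (sub_nonneg.2 hα.2)
      (mul_le_one₀ hK.2 (by linarith [hα.1]) hα.2)
  have hF := rpow_nonneg hx.le ((7 : ℝ) / 8 - 2)
  calc |etaDeriv2 K α x|
      ≤ |K * α * (1 - α) * sin x ^ (α - 2) * cos x ^ 2|
        + |sin x * (1 - K * α * sin x ^ (α - 1))| := abs_sub _ _
    _ ≤ (1 - α) * sin x ^ ((7 : ℝ) / 8 - 2)
          + (A + 40) * (1 - α) * sin x ^ ((7 : ℝ) / 8 - 2) := by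
        gcongr
        exact hsing.trans (mul_le_mul_of_nonneg_right hcoef hF)
    _ = (A + 41) * (1 - α) * sin x ^ ((7 : ℝ) / 8 - 2) := by ring

theorem abs_etaDeriv3_le (hx : 0 < sin x) (hα : α ∈ Icc (9 / 10) 1) (hK0 : 0 ≤ K)
    (hK : K ∈ Icc (1 - A * (1 - α)) 1) :
    |etaDeriv3 K α x| ≤ (A + 41) * (1 - α) * sin x ^ ((7 : ℝ) / 8 - 3) := by
  obtain ⟨hα9, hα1⟩ := hα
  have hreg := abs_mul_one_sub_mul_rpow_le hx (sin_le_one x) ⟨hα9, hα1⟩ hK0 hK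
    (β := 3 * α ^ 2 - 2 * α) ⟨by nlinarith, by nlinarith⟩ (by nlinarith) (abs_cos_le_one x)
    (show (7 : ℝ) / 8 - 3 ≤ -(1 / 8) by norm_num)
  have hsing := abs_mul_rpow_mul_pow_le (a := K * α * (1 - α) * (2 - α)) 3 hx (sin_le_one x)
    (abs_cos_le_one x) (show (7 : ℝ) / 8 - 3 ≤ α - 3 by linarith)
  have hcoef : |K * α * (1 - α) * (2 - α)| ≤ 1 - α := by
    rw [abs_of_nonneg (mul_nonneg (mul_nonneg (mul_nonneg hK0 (by linarith))
      (sub_nonneg.2 hα1)) (by linarith))]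
    calc K * α * (1 - α) * (2 - α) = K * (α * (2 - α)) * (1 - α) := by ring
      _ ≤ 1 * (1 - α) := mul_le_mul_of_nonneg_right
          (mul_le_one₀ hK.2 (by nlinarith) (by nlinarith [sq_nonneg (1 - α)])) (by linarith)
      _ = 1 - α := one_mul _
  have hF := rpow_nonneg hx.le ((7 : ℝ) / 8 - 3)
  calc |etaDeriv3 K α x|
      ≤ |K * α * (1 - α) * (2 - α) * sin x ^ (α - 3) * cos x ^ 3|
        + |cos x * (1 - K * (3 * α ^ 2 - 2 * α) * sin x ^ (α - 1))| := by
        rw [etaDeriv3, abs_neg]; exact abs_add_le _ _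
    _ ≤ (1 - α) * sin x ^ ((7 : ℝ) / 8 - 3)
          + (A + 40) * (1 - α) * sin x ^ ((7 : ℝ) / 8 - 3) := by
        gcongr
        exact hsing.trans (mul_le_mul_of_nonneg_right hcoef hF)
    _ = (A + 41) * (1 - α) * sin x ^ ((7 : ℝ) / 8 - 3) := by ring

end Bounds

/-- Estimate (6.8) of Lemma 6.1 (with `κ₂ = 7/8`): for `α ∈ (9/10, 1)`,
`i ∈ {1,2,3}`, `x ∈ (0, π)`,
`|∂_x^i η_α(x)| ≤ C (1-α)(sin x)^{7/8 - i}`, where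
`η_α(x) = sin x - c_α (sin x)^α` and
`c_α = ((1/π)∫_0^π (sin x)^α cot(x/2) dx)⁻¹`. -/
theorem eta_alpha_derivative_bounds :
    ∃ C : ℝ, 0 < C ∧
      ∀ α : ℝ, 9 / 10 < α → α < 1 →
        ∀ i : ℕ, (i = 1 ∨ i = 2 ∨ i = 3) →
          ∀ x ∈ Ioo (0 : ℝ) π,
            |iteratedDeriv i
                (fun t => Real.sin t
                  - ((1 / π) * ∫ s in (0:ℝ)..π, Real.sin s ^ α * Real.cot (s / 2))⁻¹
                    * Real.sin t ^ α) x|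
              ≤ C * (1 - α) * Real.sin x ^ ((7 : ℝ) / 8 - i) := by
  obtain ⟨A, hA, hc⟩ := exists_cAlpha_bounds
  refine ⟨A + 41, by positivity, fun α hα hα1 i hi x hx => ?_⟩
  obtain ⟨hc0, hcA⟩ := hc α hα.le hα1
  have hα' : α ∈ Icc (9 / 10) 1 := ⟨hα.le, hα1.le⟩
  have hsin : 0 < sin x := sin_pos_of_pos_of_lt_pi hx.1 hx.2
  change |iteratedDeriv i (eta (cAlpha α) α) x| ≤ _
  rcases hi with rfl | rfl | rfl
  · rw [eqOn_iteratedDeriv_one_eta hsin.ne']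
    exact_mod_cast abs_etaDeriv1_le hsin hα' hc0 hcA
  · rw [eqOn_iteratedDeriv_two_eta hsin.ne']
    exact_mod_cast abs_etaDeriv2_le hsin hα' hc0 hcA
  · rw [eqOn_iteratedDeriv_three_eta hsin.ne']
    exact_mod_cast abs_etaDeriv3_le hsin hα' hc0 hcA
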